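/- Assume in addition that q^N = (-1)^{N+1}. Let (μ, ν) be a regular pair of standard Weyl pairs, and set P = X_μ^{-1}⊗Id + Y_μ⊗Y_ν^{-1} and Q = q^{-1}·Y_μ⊗X_ν^{-1}Y_ν^{-1} in End(ℂ^N ⊗ ℂ^N). Then P^N = (x_μ^{-1} + y_μ·y_ν^{-1})·Id and Q^N = (y_μ·x_ν^{-1}·y_ν^{-1})·Id; consequently the operators X̂ : f ↦ P^{-1}∘f and Ŷ : f ↦ Q∘f on the Clebsch–Gordan space V_{(μ,ν)} satisfy X̂^N = (x_μ^{-1} + y_μ·y_ν^{-1})^{-1}·Id and Ŷ^N = (y_μ·x_ν^{-1}·y_ν^{-1})·Id. -/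

import Mathlib

open TensorProduct

noncomputable section

/-- ℂ^N: functions from ℤ/Nℤ to ℂ. -/
abbrev CN (N : ℕ) := ZMod N → ℂ

/-- The operator A with A e_k = q^{2k} e_k. -/
def opA (q : ℂ) (N : ℕ) : Module.End ℂ (CN N) where
  toFun f := fun k => q ^ (2 * k.val) * f k
  map_add' f g := by funext k; simp [mul_add]
  map_smul' c f := by funext k; simp [smul_eq_mul]; ring

/-- The operator B with B e_k = e_{k+1}. -/
def opB (N : ℕ) : Module.End ℂ (CN N) where
  toFun f := fun k => f (k - 1)
  map_add' f g := by funext k; simp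
  map_smul' c f := by funext k; simp

/-- The operator C with C e_k = q^{1-2k} e_{k-1}, i.e. (C f)(k) = q^{-1-2k} f(k+1). -/
def opC (q : ℂ) (N : ℕ) : Module.End ℂ (CN N) where
  toFun f := fun k => q ^ (-1 - 2 * (k.val : ℤ)) * f (k + 1)
  map_add' f g := by funext k; simp [mul_add]
  map_smul' c f := by funext k; simp [smul_eq_mul]; ring

/-- A Weyl pair: invertible endomorphisms with X Y = q² Y X. -/
def IsWeylPair (q : ℂ) {V : Type*} [AddCommMonoid V] [Module ℂ V]
    (X Y : Module.End ℂ V) : Prop :=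
  IsUnit X ∧ IsUnit Y ∧ X * Y = q ^ 2 • (Y * X)

/-- A subspace invariant under both X and Y. -/
def WeylInvariant {V : Type*} [AddCommMonoid V] [Module ℂ V]
    (X Y : Module.End ℂ V) (W : Submodule ℂ V) : Prop :=
  (∀ v ∈ W, X v ∈ W) ∧ (∀ v ∈ W, Y v ∈ W)

/-- An irreducible Weyl pair. -/
def IsIrreducibleWeylPair (q : ℂ) {V : Type*} [AddCommMonoid V] [Module ℂ V]
    (X Y : Module.End ℂ V) : Prop :=
  IsWeylPair q X Y ∧ Nontrivial V ∧
    ∀ W : Submodule ℂ V, WeylInvariant X Y W → W = ⊥ ∨ W = ⊤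
/-- The Clebsch–Gordan space of a pair of Weyl pairs: all linear maps
f : ℂ^N → ℂ^N ⊗ ℂ^N with f∘X_{αβ} = (X_α⊗X_β)∘f and
f∘Y_{αβ} = (X_α⁻¹⊗Y_β + Y_α⊗Id)∘f. -/
def CGsub (N : ℕ) (Xa Ya Xb Yb Xab Yab : Module.End ℂ (CN N)) :
    Submodule ℂ (CN N →ₗ[ℂ] (CN N ⊗[ℂ] CN N)) where
  carrier := {f | f ∘ₗ Xab = (TensorProduct.map Xa Xb) ∘ₗ f ∧
    f ∘ₗ Yab = (TensorProduct.map (Ring.inverse Xa) Yb + TensorProduct.map Ya 1) ∘ₗ f}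
  add_mem' := by
    rintro f g ⟨hf1, hf2⟩ ⟨hg1, hg2⟩
    constructor <;> simp only [LinearMap.add_comp, LinearMap.comp_add, hf1, hf2, hg1, hg2]
  zero_mem' := by constructor <;> simp
  smul_mem' := by
    rintro c f ⟨hf1, hf2⟩
    constructor <;> simp only [LinearMap.smul_comp, LinearMap.comp_smul, hf1, hf2]


/-!
The summands `x = X_μ⁻¹ ⊗ 1` and `y = Y_μ ⊗ Y_ν⁻¹` of `P` satisfy `x y = q⁻² y x`. For such a
pair, `(x + y)^n` expands with Gaussian binomial coefficients in `q⁻²`, and since `q⁻²` is a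
primitive `N`-th root of unity the coefficients `[N choose k]` with `0 < k < N` vanish. Hence
`P^N = x^N + y^N`, a scalar because `A^N` and `B^N` are.
`Q` is `q⁻¹ X Y` with `Y X = q⁻² X Y`, so `Q^N = q^{-N²} X^N Y^N`, and `q^{N²} = 1` because
`q^N = ±1`. The operators `X̂` and `Ŷ` compose on the left with `P⁻¹` and `Q`, so their `N`-th
powers compose with `(P^N)⁻¹` and `Q^N`.
-/

open Finset

section QBinomial

variable {R : Type*} [CommRing R]

def qBinomial (ζ : R) : ℕ → ℕ → R
  | _, 0 => 1
  | 0, _ + 1 => 0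
  | n + 1, k + 1 => qBinomial ζ n k + ζ ^ (k + 1) * qBinomial ζ n (k + 1)

variable (ζ : R)

@[simp]
theorem qBinomial_zero_right (n : ℕ) : qBinomial ζ n 0 = 1 := by cases n <;> rfl

theorem qBinomial_succ_succ (n k : ℕ) :
    qBinomial ζ (n + 1) (k + 1) = qBinomial ζ n k + ζ ^ (k + 1) * qBinomial ζ n (k + 1) := rfl

theorem qBinomial_eq_zero_of_lt : ∀ {n k : ℕ}, n < k → qBinomial ζ n k = 0
  | 0, _ + 1, _ => rfl
  | n + 1, k + 1, h => by
    rw [qBinomial_succ_succ, qBinomial_eq_zero_of_lt (by omega),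
      qBinomial_eq_zero_of_lt (by omega), mul_zero, add_zero]

@[simp]
theorem qBinomial_self : ∀ n : ℕ, qBinomial ζ n n = 1
  | 0 => rfl
  | n + 1 => by
    rw [qBinomial_succ_succ, qBinomial_self n, qBinomial_eq_zero_of_lt ζ n.lt_succ_self, mul_zero,
      add_zero]

/-- A `ζ`-analogue of `n.descFactorial k = k ! * n.choose k`. -/
theorem prod_mul_qBinomial : ∀ n k : ℕ,
    (∏ i ∈ range k, (1 - ζ ^ (i + 1))) * qBinomial ζ n k = ∏ i ∈ range k, (1 - ζ ^ (n - i))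
  | _, 0 => by simp
  | 0, k + 1 => by simp [qBinomial_eq_zero_of_lt, prod_range_succ']
  | n + 1, k + 1 => by
    rcases lt_or_ge n k with hnk | hkn
    · rw [qBinomial_eq_zero_of_lt ζ (by omega), mul_zero]
      exact (prod_eq_zero (mem_range.2 (by omega : n + 1 < k + 1)) (by simp)).symm
    have hpow : ζ ^ (k + 1) * ζ ^ (n - k) = ζ ^ (n + 1) := by
      rw [← pow_add]; congr 1; omega
    have hk := prod_mul_qBinomial n k
    have hk1 := prod_mul_qBinomial n (k + 1)
    rw [prod_range_succ, prod_range_succ (fun i => 1 - ζ ^ (n - i))] at hk1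
    rw [qBinomial_succ_succ, prod_range_succ, prod_range_succ']
    simp only [Nat.add_sub_add_right, Nat.sub_zero]
    linear_combination (1 - ζ ^ (k + 1)) * hk + ζ ^ (k + 1) * hk1
      - (∏ i ∈ range k, (1 - ζ ^ (n - i))) * hpow

theorem qBinomial_eq_zero_of_isPrimitiveRoot [IsDomain R] {ζ : R} {n k : ℕ}
    (hζ : IsPrimitiveRoot ζ n) (hk₀ : 0 < k) (hkn : k < n) : qBinomial ζ n k = 0 := by
  have hprod : ∏ i ∈ range k, (1 - ζ ^ (i + 1)) ≠ 0 :=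
    prod_ne_zero_iff.2 fun i hi => sub_ne_zero.2 fun h =>
      hζ.pow_ne_one_of_pos_of_lt i.succ_ne_zero (by simp at hi; omega) h.symm
  have h := prod_mul_qBinomial ζ n k
  rwa [prod_eq_zero (f := fun i => 1 - ζ ^ (n - i)) (mem_range.2 hk₀) (by simp [hζ.pow_eq_one]),
    mul_eq_zero, or_iff_right hprod] at h

end QBinomial

section QCommute

variable {R A : Type*} [CommRing R] [Ring A] [Algebra R A]

def QCommute (ζ : R) (x y : A) : Prop := y * x = ζ • (x * y)

namespace QCommute

variable {ζ : R} {x y : A}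

theorem mul_pow_left (h : QCommute ζ x y) : ∀ n : ℕ, y * x ^ n = ζ ^ n • (x ^ n * y)
  | 0 => by simp
  | n + 1 => by
    rw [pow_succ, ← mul_assoc, h.mul_pow_left n, smul_mul_assoc, mul_assoc, h, mul_smul_comm,
      smul_smul, ← mul_assoc, ← pow_succ, ← pow_succ]

theorem smul (h : QCommute ζ x y) (a b : R) : QCommute ζ (a • x) (b • y) := by
  unfold QCommute at h ⊢
  rw [smul_mul_smul_comm, h, smul_mul_smul_comm, smul_smul, smul_smul, mul_comm b a, mul_comm ζ]

theorem add_pow (h : QCommute ζ x y) (n : ℕ) :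
    (x + y) ^ n = ∑ k ∈ range (n + 1), qBinomial ζ n k • (x ^ k * y ^ (n - k)) := by
  induction n with
  | zero => simp
  | succ n ih =>
    have hx : x * (x + y) ^ n =
        ∑ k ∈ range (n + 1), qBinomial ζ n k • (x ^ (k + 1) * y ^ (n - k)) := by
      simp only [ih, mul_sum, mul_smul_comm, ← mul_assoc, ← pow_succ']
    have hy : y * (x + y) ^ n = ∑ k ∈ range (n + 1),
        (ζ ^ (k + 1) * qBinomial ζ n (k + 1)) • (x ^ (k + 1) * y ^ (n - k)) + y ^ (n + 1) := by
      have hterm : ∀ k ∈ range (n + 1), y * (qBinomial ζ n k • (x ^ k * y ^ (n - k))) =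
          (ζ ^ k * qBinomial ζ n k) • (x ^ k * y ^ (n + 1 - k)) := fun k hk => by
        rw [mul_smul_comm, ← mul_assoc, h.mul_pow_left, smul_mul_assoc, smul_smul, mul_assoc,
          ← pow_succ', mul_comm (qBinomial ζ n k),
          Nat.sub_add_comm (Nat.lt_succ_iff.1 (mem_range.1 hk))]
      have hlast :
          (ζ ^ (n + 1) * qBinomial ζ n (n + 1)) • (x ^ (n + 1) * y ^ (n + 1 - (n + 1))) = 0 := by
        rw [qBinomial_eq_zero_of_lt ζ n.lt_succ_self, mul_zero, zero_smul]
      rw [ih, mul_sum, sum_congr rfl hterm, ← add_zero (∑ k ∈ range (n + 1), _), ← hlast,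
        ← sum_range_succ, sum_range_succ']
      simp
    rw [pow_succ', add_mul, hx, hy, sum_range_succ' _ (n + 1)]
    simp [qBinomial_succ_succ, add_smul, sum_add_distrib, add_assoc]

theorem add_pow_eq_of_isPrimitiveRoot [IsDomain R] (h : QCommute ζ x y) {n : ℕ}
    (hζ : IsPrimitiveRoot ζ n) (hn : 0 < n) : (x + y) ^ n = x ^ n + y ^ n := by
  rw [h.add_pow, sum_range_succ, sum_eq_single_of_mem 0 (mem_range.2 hn)]
  · simp [add_comm]
  · intro k hk hk₀
    rw [qBinomial_eq_zero_of_isPrimitiveRoot hζ (Nat.pos_of_ne_zero hk₀) (mem_range.1 hk),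
      zero_smul]

theorem smul_mul_pow {c : R} (h : QCommute (c ^ 2) x y) :
    ∀ n : ℕ, (c • (x * y)) ^ n = c ^ (n ^ 2) • (x ^ n * y ^ n)
  | 0 => by simp
  | n + 1 => by
    rw [pow_succ', smul_mul_pow h n, smul_mul_smul_comm, mul_assoc x, ← mul_assoc y,
      h.mul_pow_left, smul_mul_assoc, mul_smul_comm, smul_smul]
    congr 1
    · ring
    · simp only [pow_succ', mul_assoc]

end QCommute

theorem QCommute.tensorProduct_map {M N : Type*} [AddCommGroup M] [Module R M] [AddCommGroup N]
    [Module R N] {ζ : R} {a b : Module.End R M} {c d : Module.End R N} (h : QCommute ζ a b)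
    (hcd : Commute c d) : QCommute ζ (TensorProduct.map a c) (TensorProduct.map b d) := by
  unfold QCommute at h ⊢
  rw [← TensorProduct.map_mul, ← TensorProduct.map_mul, h, ← hcd.eq, TensorProduct.map_smul_left]

end QCommute

theorem Ring.inverse_smul {K A : Type*} [Field K] [Ring A] [Module K A] [IsScalarTower K A A]
    [SMulCommClass K A A] (c : K) (a : A) : Ring.inverse (c • a) = c⁻¹ • Ring.inverse a := by
  rcases eq_or_ne c 0 with rfl | hc
  · simp
  let u : Aˣ := ⟨c • 1, c⁻¹ • 1, by simp [smul_smul, hc], by simp [smul_smul, hc]⟩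
  rw [← smul_one_mul c a, Ring.inverse_mul (Or.inl u.isUnit), Ring.inverse_unit u]
  exact mul_smul_one c⁻¹ _

theorem Submodule.pow_eq_smul_one_of_coe_apply_eq_comp {R M N : Type*} [CommSemiring R]
    [AddCommMonoid M] [Module R M] [AddCommMonoid N] [Module R N] {W : Submodule R (M →ₗ[R] N)}
    {T : Module.End R W} {S : Module.End R N} (hT : ∀ f : W, (T f : M →ₗ[R] N) = S ∘ₗ f)
    {n : ℕ} {c : R} (hS : S ^ n = c • 1) : T ^ n = c • 1 := by
  have hpow : ∀ (m : ℕ) (f : W), ((T ^ m) f : M →ₗ[R] N) = (S ^ m) ∘ₗ f := by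
    intro m
    induction m with
    | zero => intro f; rfl
    | succ m ih =>
      intro f
      rw [pow_succ, Module.End.mul_apply, ih, hT, pow_succ, Module.End.mul_eq_comp,
        LinearMap.comp_assoc]
  ext f : 1
  exact Subtype.ext ((hpow n f).trans (by rw [hS]; rfl))

theorem ZMod.pow_val_add_one {M : Type*} [Monoid M] {N : ℕ} [NeZero N] {ζ : M} (hζ : ζ ^ N = 1)
    (k : ZMod N) : ζ ^ (k + 1).val = ζ ^ k.val * ζ := by
  rw [ZMod.val_add, ← pow_eq_pow_mod _ hζ, pow_add, ZMod.val_one_eq_one_mod,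
    ← pow_eq_pow_mod _ hζ, pow_one]

section StandardOperators

variable {N : ℕ}

def opBInv (N : ℕ) : Module.End ℂ (CN N) where
  toFun f := fun k => f (k + 1)
  map_add' _ _ := rfl
  map_smul' _ _ := rfl

@[simp]
theorem opA_apply (c : ℂ) (f : CN N) (k : ZMod N) : opA c N f k = c ^ (2 * k.val) * f k := rfl

@[simp]
theorem opB_apply (f : CN N) (k : ZMod N) : opB N f k = f (k - 1) := rfl

@[simp]
theorem opBInv_apply (f : CN N) (k : ZMod N) : opBInv N f k = f (k + 1) := rfl

theorem opA_mul_opA (a b : ℂ) : opA a N * opA b N = opA (a * b) N := by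
  ext f k
  simp [mul_pow, mul_assoc]

theorem opA_eq_one {c : ℂ} (hc : c ^ 2 = 1) : opA c N = 1 := by
  ext f k
  simp [pow_mul, hc]

theorem opA_pow (c : ℂ) (n : ℕ) : opA c N ^ n = opA (c ^ n) N := by
  induction n with
  | zero => rw [pow_zero, pow_zero, opA_eq_one (one_pow 2)]
  | succ n ih => rw [pow_succ, ih, opA_mul_opA, pow_succ]

theorem opA_pow_card {c : ℂ} (hc : (c ^ 2) ^ N = 1) : opA c N ^ N = 1 := by
  rw [opA_pow, opA_eq_one (by rw [← pow_mul, mul_comm, pow_mul, hc])]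

theorem inverse_opA {c : ℂ} (hc : c ≠ 0) : Ring.inverse (opA c N) = opA c⁻¹ N :=
  Ring.inverse_unit ⟨opA c N, opA c⁻¹ N,
    by rw [opA_mul_opA, mul_inv_cancel₀ hc, opA_eq_one (one_pow 2)],
    by rw [opA_mul_opA, inv_mul_cancel₀ hc, opA_eq_one (one_pow 2)]⟩

theorem opB_mul_opBInv : opB N * opBInv N = 1 := by
  ext f k
  simp

theorem opBInv_mul_opB : opBInv N * opB N = 1 := by
  ext f k
  simp

theorem inverse_opB : Ring.inverse (opB N) = opBInv N :=
  Ring.inverse_unit ⟨opB N, opBInv N, opB_mul_opBInv, opBInv_mul_opB⟩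

theorem opB_pow_apply (n : ℕ) (f : CN N) (k : ZMod N) : (opB N ^ n) f k = f (k - n) := by
  induction n generalizing k with
  | zero => simp
  | succ n ih => simp [pow_succ', ih, sub_sub, add_comm]

theorem opB_pow_card : opB N ^ N = 1 := by
  ext f k
  simp [opB_pow_apply]

theorem opBInv_pow_card : opBInv N ^ N = 1 := by
  have h := Commute.mul_pow (show Commute (opBInv N) (opB N) from
    opBInv_mul_opB.trans opB_mul_opBInv.symm) N
  rwa [opBInv_mul_opB, one_pow, opB_pow_card, mul_one, eq_comm] at h

variable [NeZero N] {c : ℂ}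

theorem qCommute_opB_opA (hc : (c ^ 2) ^ N = 1) : QCommute (c ^ 2) (opB N) (opA c N) := by
  refine LinearMap.ext fun f => funext fun k => ?_
  have h := ZMod.pow_val_add_one hc (k - 1)
  rw [sub_add_cancel] at h
  simp only [Module.End.mul_apply, LinearMap.smul_apply, Pi.smul_apply, opA_apply, opB_apply,
    smul_eq_mul, pow_mul, h]
  ring

theorem qCommute_opA_opBInv (hc : (c ^ 2) ^ N = 1) : QCommute (c ^ 2) (opA c N) (opBInv N) := by
  refine LinearMap.ext fun f => funext fun k => ?_
  simp only [Module.End.mul_apply, LinearMap.smul_apply, Pi.smul_apply, opA_apply, opBInv_apply,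
    smul_eq_mul, pow_mul, ZMod.pow_val_add_one hc]
  ring

end StandardOperators

section WeylTensor

def opP (q : ℂ) (N : ℕ) (u v v' : ℂ) : Module.End ℂ (CN N ⊗[ℂ] CN N) :=
  map (Ring.inverse (u • opA q N)) 1 + map (v • opB N) (Ring.inverse (v' • opB N))

def opQ (q : ℂ) (N : ℕ) (v u' v' : ℂ) : Module.End ℂ (CN N ⊗[ℂ] CN N) :=
  q⁻¹ • map (v • opB N) (Ring.inverse (u' • opA q N) * Ring.inverse (v' • opB N))

variable {N : ℕ} [NeZero N] {q : ℂ}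

theorem opP_pow (hq : IsPrimitiveRoot (q ^ 2) N) (u v v' : ℂ) :
    opP q N u v v' ^ N = ((u ^ N)⁻¹ + v ^ N * (v' ^ N)⁻¹) • 1 := by
  have hq₀ : q ≠ 0 := ne_zero_pow two_ne_zero (hq.ne_zero (NeZero.ne N))
  have hc : (q⁻¹ ^ 2) ^ N = 1 := by rw [inv_pow, inv_pow, hq.pow_eq_one, inv_one]
  have hcomm : QCommute (q⁻¹ ^ 2) (map (v • opB N) (v'⁻¹ • opBInv N))
      (map (u⁻¹ • opA q⁻¹ N) 1) :=
    ((qCommute_opB_opA hc).smul v u⁻¹).tensorProduct_map (Commute.one_right _)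
  rw [opP, Ring.inverse_smul u (opA q N), Ring.inverse_smul v' (opB N), inverse_opA hq₀,
    inverse_opB, add_comm,
    hcomm.add_pow_eq_of_isPrimitiveRoot (by simpa [inv_pow] using hq.inv) (NeZero.pos N)]
  simp [map_smul_left, map_smul_right, smul_pow, opB_pow_card, opBInv_pow_card, opA_pow_card hc,
    smul_smul]
  rw [add_comm, mul_pow, inv_pow, mul_comm, add_smul]

theorem opQ_pow (hqN : q ^ N = (-1) ^ (N + 1)) (v u' v' : ℂ) :
    opQ q N v u' v' ^ N = (v ^ N * (u' ^ N)⁻¹ * (v' ^ N)⁻¹) • 1 := by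
  have hq2 : (q ^ N) ^ 2 = 1 := by rw [hqN, ← pow_mul, pow_mul', neg_one_sq, one_pow]
  have hq₀ : q ≠ 0 := by
    rintro rfl
    simp [NeZero.ne N] at hq2
  have hc : (q⁻¹ ^ 2) ^ N = 1 := by rw [inv_pow, inv_pow, ← pow_mul, pow_mul', hq2, inv_one]
  have hqN2 : q⁻¹ ^ (N ^ 2) = 1 := by
    rw [inv_pow, sq, pow_mul, hqN, ← pow_mul, mul_comm, (Nat.even_mul_succ_self N).neg_one_pow,
      inv_one]
  have hQ : opQ q N v u' v' =
      (v * u'⁻¹ * v'⁻¹) • map (opB N) (q⁻¹ • (opA q⁻¹ N * opBInv N)) := by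
    rw [opQ, Ring.inverse_smul u' (opA q N), Ring.inverse_smul v' (opB N), inverse_opA hq₀,
      inverse_opB]
    simp only [smul_mul_smul_comm, map_smul_left, map_smul_right, smul_smul]
    ring_nf
  rw [hQ, smul_pow, TensorProduct.map_pow, (qCommute_opA_opBInv hc).smul_mul_pow,
    opA_pow_card hc, opBInv_pow_card, opB_pow_card, hqN2, one_smul, one_mul,
    TensorProduct.map_one, mul_pow, mul_pow, inv_pow, inv_pow]

end WeylTensor

theorem stmt18_general (N : ℕ) (hN : 1 ≤ N) (q : ℂ)
    (hqN : q ^ N = (-1 : ℂ) ^ (N + 1)) (hq : IsPrimitiveRoot (q ^ 2) N)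
    (u v u' v' u'' v'' : ℂ) :
    let Xμ : Module.End ℂ (CN N) := u • opA q N
    let Yμ : Module.End ℂ (CN N) := v • opB N
    let Xν : Module.End ℂ (CN N) := u' • opA q N
    let Yν : Module.End ℂ (CN N) := v' • opB N
    let Xμν : Module.End ℂ (CN N) := u'' • opA q N
    let Yμν : Module.End ℂ (CN N) := v'' • opB N
    let CG := CGsub N Xμ Yμ Xν Yν Xμν Yμν
    let P : Module.End ℂ (CN N ⊗[ℂ] CN N) :=
      TensorProduct.map (Ring.inverse Xμ) 1 + TensorProduct.map Yμ (Ring.inverse Yν)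
    let Q : Module.End ℂ (CN N ⊗[ℂ] CN N) :=
      q⁻¹ • TensorProduct.map Yμ (Ring.inverse Xν * Ring.inverse Yν)
    P ^ N = ((u ^ N)⁻¹ + v ^ N * (v' ^ N)⁻¹) • (1 : Module.End ℂ (CN N ⊗[ℂ] CN N)) ∧
    Q ^ N = (v ^ N * (u' ^ N)⁻¹ * (v' ^ N)⁻¹) • (1 : Module.End ℂ (CN N ⊗[ℂ] CN N)) ∧
    ∀ Xh Yh : Module.End ℂ ↥CG,
      (∀ f : CG, (Xh f : CN N →ₗ[ℂ] CN N ⊗[ℂ] CN N) =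
        Ring.inverse P ∘ₗ (f : CN N →ₗ[ℂ] CN N ⊗[ℂ] CN N)) →
      (∀ f : CG, (Yh f : CN N →ₗ[ℂ] CN N ⊗[ℂ] CN N) =
        Q ∘ₗ (f : CN N →ₗ[ℂ] CN N ⊗[ℂ] CN N)) →
      Xh ^ N = ((u ^ N)⁻¹ + v ^ N * (v' ^ N)⁻¹)⁻¹ • (1 : Module.End ℂ ↥CG) ∧
      Yh ^ N = (v ^ N * (u' ^ N)⁻¹ * (v' ^ N)⁻¹) • (1 : Module.End ℂ ↥CG) := by
  intro Xμ Yμ Xν Yν Xμν Yμν CG P Q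
  have : NeZero N := ⟨by omega⟩
  have hP : P ^ N = _ := opP_pow hq u v v'
  have hQ : Q ^ N = _ := opQ_pow hqN v u' v'
  refine ⟨hP, hQ, fun Xh Yh hX hY => ⟨?_, Submodule.pow_eq_smul_one_of_coe_apply_eq_comp hY hQ⟩⟩
  refine Submodule.pow_eq_smul_one_of_coe_apply_eq_comp hX ?_
  rw [Ring.inverse_pow, hP, Ring.inverse_smul _ (1 : Module.End ℂ (CN N ⊗[ℂ] CN N)),
    Ring.inverse_one]

/-- assuming moreover q^N = (-1)^{N+1}, the operators P and Q of a
regular pair satisfy P^N = (x_μ⁻¹ + y_μy_ν⁻¹)·Id and Q^N = (y_μx_ν⁻¹y_ν⁻¹)·Id,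
so the induced operators X̂ : f ↦ P⁻¹∘f and Ŷ : f ↦ Q∘f on the Clebsch–Gordan
space satisfy X̂^N = (x_μ⁻¹ + y_μy_ν⁻¹)⁻¹·Id and Ŷ^N = (y_μx_ν⁻¹y_ν⁻¹)·Id. -/
theorem stmt18 (N : ℕ) (hN : 1 ≤ N) (q : ℂ)
    (hqN : q ^ N = (-1 : ℂ) ^ (N + 1)) (hq : IsPrimitiveRoot (q ^ 2) N)
    (u v u' v' u'' v'' : ℂ) (hu : u ≠ 0) (hv : v ≠ 0) (hu' : u' ≠ 0) (hv' : v' ≠ 0)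
    (hu'' : u'' ≠ 0) (hv'' : v'' ≠ 0)
    (hreg : (u ^ N)⁻¹ * v' ^ N + v ^ N ≠ 0)
    (hx : u'' ^ N = u ^ N * u' ^ N) (hy : v'' ^ N = (u ^ N)⁻¹ * v' ^ N + v ^ N) :
    let Xμ : Module.End ℂ (CN N) := u • opA q N
    let Yμ : Module.End ℂ (CN N) := v • opB N
    let Xν : Module.End ℂ (CN N) := u' • opA q N
    let Yν : Module.End ℂ (CN N) := v' • opB N
    let Xμν : Module.End ℂ (CN N) := u'' • opA q N
    let Yμν : Module.End ℂ (CN N) := v'' • opB N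
    let CG := CGsub N Xμ Yμ Xν Yν Xμν Yμν
    let P : Module.End ℂ (CN N ⊗[ℂ] CN N) :=
      TensorProduct.map (Ring.inverse Xμ) 1 + TensorProduct.map Yμ (Ring.inverse Yν)
    let Q : Module.End ℂ (CN N ⊗[ℂ] CN N) :=
      q⁻¹ • TensorProduct.map Yμ (Ring.inverse Xν * Ring.inverse Yν)
    P ^ N = ((u ^ N)⁻¹ + v ^ N * (v' ^ N)⁻¹) • (1 : Module.End ℂ (CN N ⊗[ℂ] CN N)) ∧
    Q ^ N = (v ^ N * (u' ^ N)⁻¹ * (v' ^ N)⁻¹) • (1 : Module.End ℂ (CN N ⊗[ℂ] CN N)) ∧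
    ∀ Xh Yh : Module.End ℂ ↥CG,
      (∀ f : CG, (Xh f : CN N →ₗ[ℂ] CN N ⊗[ℂ] CN N) =
        Ring.inverse P ∘ₗ (f : CN N →ₗ[ℂ] CN N ⊗[ℂ] CN N)) →
      (∀ f : CG, (Yh f : CN N →ₗ[ℂ] CN N ⊗[ℂ] CN N) =
        Q ∘ₗ (f : CN N →ₗ[ℂ] CN N ⊗[ℂ] CN N)) →
      Xh ^ N = ((u ^ N)⁻¹ + v ^ N * (v' ^ N)⁻¹)⁻¹ • (1 : Module.End ℂ ↥CG) ∧
      Yh ^ N = (v ^ N * (u' ^ N)⁻¹ * (v' ^ N)⁻¹) • (1 : Module.End ℂ ↥CG) :=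
  stmt18_general N hN q hqN hq u v u' v' u'' v''

end
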